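/- arXiv:2012.13418 — 3 statements merged into one kernel-verified Lean document; each statement's English description precedes it below -/
import Mathlib

section
/- Let d ≥ 2, a₀ ∈ ℝ^d, and let F_L : ℝ^{d−1} → ℝ^d be differentiable at η. Let ρ : ℝ → ℝ be differentiable at ξ > 0 and α : ℝ^{d−1} → ℝ be differentiable at η, and suppose φ : ℝ^d → ℝ is differentiable at x = F_K(ξ,η) and satisfies φ(F_K(ξ',η')) = ρ(ξ')α(η') for all (ξ',η') in a neighborhood of (ξ,η). If the matrix J_K(1,η) is invertible, then the gradient of φ at x satisfies ∇φ(x) = J_K(1,η)^{−T} w, where w ∈ ℝ^d has first component ρ'(ξ)α(η) and remaining d−1 components equal to ξ^{−1} ρ(ξ) ∇_η α(η). -/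
open Matrix

lemma clm_apply_eq_sum {m : ℕ} (f : (Fin m → ℝ) →L[ℝ] ℝ) (v : Fin m → ℝ) :
    f v = ∑ i, v i * f (Pi.single i 1) := by
  have := (f : (Fin m → ℝ) →ₗ[ℝ] ℝ).pi_apply_eq_sum_univ v
  simp only [ContinuousLinearMap.coe_coe] at this
  rw [this]
  refine Finset.sum_congr rfl fun i _ => ?_
  rw [smul_eq_mul]
  congr 1
  congr 1
  funext j
  simp [Pi.single_apply, eq_comm]

/-- Writing `d = n + 1` with `n ≥ 1` (so `d ≥ 2`), suppose
`φ(F_K(ξ',η')) = ρ(ξ') α(η')` near `(ξ,η)`, with `F_K(ξ,η) = ξ • (F_L η - a₀) + a₀`,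
`ρ` differentiable at `ξ > 0`, `α` differentiable at `η`, `φ` differentiable at
`x = F_K(ξ,η)`, and `J_K(1,η)` (first column `F_L η - a₀`, remaining columns the
Jacobian of `F_L` at `η`) invertible.  Then the gradient of `φ` at `x` (the vector of
partial derivatives) equals `J_K(1,η)⁻ᵀ w`, where `w` has first component
`ρ'(ξ) α(η)` and remaining components `ξ⁻¹ ρ(ξ) ∇_η α(η)`. -/
theorem duffy_gradient_formula
    (n : ℕ) (hn : 1 ≤ n)
    (a₀ : Fin (n + 1) → ℝ)
    (FL : (Fin n → ℝ) → (Fin (n + 1) → ℝ))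
    (η : Fin n → ℝ) (hFL : DifferentiableAt ℝ FL η)
    (ρ : ℝ → ℝ) (α : (Fin n → ℝ) → ℝ) (φ : (Fin (n + 1) → ℝ) → ℝ)
    (ξ : ℝ) (hξ : 0 < ξ)
    (hρ : DifferentiableAt ℝ ρ ξ) (hα : DifferentiableAt ℝ α η)
    (hφ : DifferentiableAt ℝ φ (ξ • (FL η - a₀) + a₀))
    (hsep : ∀ᶠ p : ℝ × (Fin n → ℝ) in nhds (ξ, η),
      φ (p.1 • (FL p.2 - a₀) + a₀) = ρ p.1 * α p.2)
    (JK1 : Matrix (Fin (n + 1)) (Fin (n + 1)) ℝ)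
    (hJK1 : ∀ (i : Fin (n + 1)) (j : Fin (n + 1)),
      JK1 i j =
        Fin.cases ((FL η - a₀) i) (fun j' => fderiv ℝ FL η (Pi.single j' 1) i) j)
    (hinv : IsUnit JK1) :
    (fun i => fderiv ℝ φ (ξ • (FL η - a₀) + a₀) (Pi.single i 1))
      = (JK1⁻¹)ᵀ *ᵥ
          Fin.cons (deriv ρ ξ * α η)
            (fun j => ξ⁻¹ * ρ ξ * fderiv ℝ α η (Pi.single j 1)) := by
  set x := ξ • (FL η - a₀) + a₀ with hx
  set g := fderiv ℝ φ x with hg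
  set v := FL η - a₀ with hv
  set D := fderiv ℝ FL η with hD
  set G : Fin (n + 1) → ℝ := fun i => g (Pi.single i 1) with hG
  set w : Fin (n + 1) → ℝ := Fin.cons (deriv ρ ξ * α η)
      (fun j => ξ⁻¹ * ρ ξ * fderiv ℝ α η (Pi.single j 1)) with hw
  -- ξ-direction
  have hslice1 : ∀ᶠ t in nhds ξ, φ (t • (FL η - a₀) + a₀) = ρ t * α η := by
    have ht : Filter.Tendsto (fun t : ℝ => (t, η)) (nhds ξ) (nhds (ξ, η)) :=
      (Continuous.tendsto (continuous_id.prodMk continuous_const) ξ)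
    exact ht.eventually hsep
  have hf1 : HasDerivAt (fun t : ℝ => t • v + a₀) v ξ := by
    simpa using ((hasDerivAt_id ξ).smul_const v).add_const a₀
  have hchain1 : HasDerivAt (fun t : ℝ => φ (t • v + a₀)) (g v) ξ :=
    hφ.hasFDerivAt.comp_hasDerivAt ξ hf1
  have hchain1' : HasDerivAt (fun t : ℝ => ρ t * α η) (g v) ξ :=
    hchain1.congr_of_eventuallyEq (by filter_upwards [hslice1] with t ht using ht.symm)
  have hρα : HasDerivAt (fun t : ℝ => ρ t * α η) (deriv ρ ξ * α η) ξ :=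
    hρ.hasDerivAt.mul_const (α η)
  have key1 : g v = deriv ρ ξ * α η := hchain1'.unique hρα
  -- η-direction
  have hslice2 : ∀ᶠ y in nhds η, φ (ξ • (FL y - a₀) + a₀) = ρ ξ * α y := by
    have ht : Filter.Tendsto (fun y : Fin n → ℝ => (ξ, y)) (nhds η) (nhds (ξ, η)) :=
      (Continuous.tendsto (continuous_const.prodMk continuous_id) η)
    exact ht.eventually hsep
  have hm : HasFDerivAt (fun y => ξ • (FL y - a₀) + a₀) (ξ • D) η :=
    ((hFL.hasFDerivAt.sub_const a₀).const_smul ξ).add_const a₀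
  have hchain2 : HasFDerivAt (fun y => φ (ξ • (FL y - a₀) + a₀)) (g.comp (ξ • D)) η :=
    hφ.hasFDerivAt.comp η hm
  have hchain2' : HasFDerivAt (fun y => ρ ξ * α y) (g.comp (ξ • D)) η :=
    hchain2.congr_of_eventuallyEq (by filter_upwards [hslice2] with y hy using hy.symm)
  have hρα2 : HasFDerivAt (fun y => ρ ξ * α y) (ρ ξ • fderiv ℝ α η) η :=
    hα.hasFDerivAt.const_mul (ρ ξ)
  have key2 : g.comp (ξ • D) = ρ ξ • fderiv ℝ α η := hchain2'.unique hρα2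
  have key2' : ∀ j, g (D (Pi.single j 1)) = ξ⁻¹ * ρ ξ * fderiv ℝ α η (Pi.single j 1) := by
    intro j
    have := congrFun (congrArg (fun L : (Fin n → ℝ) →L[ℝ] ℝ => (L : (Fin n → ℝ) → ℝ)) key2)
      (Pi.single j 1)
    simp only [ContinuousLinearMap.coe_comp', Function.comp_apply,
      ContinuousLinearMap.coe_smul', Pi.smul_apply, smul_eq_mul,
      ContinuousLinearMap.smul_apply, _root_.map_smul] at this
    field_simp at this ⊢
    linarith [this]
  -- matrix algebra
  have hmain : JK1ᵀ *ᵥ G = w := by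
    funext j
    refine Fin.cases ?_ (fun j' => ?_) j
    · have : (JK1ᵀ *ᵥ G) 0 = ∑ i, v i * g (Pi.single i 1) := by
        simp only [mulVec, dotProduct, transpose_apply]
        exact Finset.sum_congr rfl fun i _ => by rw [hJK1 i 0]; simp [hG]
      rw [this, ← clm_apply_eq_sum, key1]
      simp [hw]
    · have : (JK1ᵀ *ᵥ G) j'.succ = ∑ i, (D (Pi.single j' 1)) i * g (Pi.single i 1) := by
        simp only [mulVec, dotProduct, transpose_apply]
        exact Finset.sum_congr rfl fun i _ => by rw [hJK1 i j'.succ]; simp [hG]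
      rw [this, ← clm_apply_eq_sum, key2' j']
      simp [hw]
  have hdet : IsUnit JK1ᵀ.det := by
    rw [Matrix.det_transpose]
    exact (Matrix.isUnit_iff_isUnit_det JK1).mp hinv
  have : G = (JK1ᵀ)⁻¹ *ᵥ w := by
    rw [← hmain, Matrix.mulVec_mulVec, Matrix.nonsing_inv_mul _ hdet, Matrix.one_mulVec]
  rw [Matrix.transpose_nonsing_inv]
  exact this
end

section
/- Define F_∞(μ₁,μ₂,ξ) = (μ₁, μ₂, ξ/(1−ξ)) for ξ ∈ [0,1), and S_∞(x,y,z) = (x/(1+z), y/(1+z), z/(1+z)). Then for all μ₁, μ₂ ∈ ℝ and all ξ ∈ [0,1), S_∞(F_∞(μ₁,μ₂,ξ)) = ((1−ξ)μ₁, (1−ξ)μ₂, ξ); moreover, setting ξ' = 1 − ξ, this composition equals the Duffy transformation ξ'(F_L(μ₁,μ₂) − a₀) + a₀ with collapsed vertex a₀ = (0,0,1) and base map F_L(μ₁,μ₂) = (μ₁, μ₂, 0). -/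
/-- The map of the unit cube (coordinates `(μ₁,μ₂,ξ)`) onto the infinite pyramid,
`F_∞(μ₁,μ₂,ξ) = (μ₁, μ₂, ξ/(1−ξ))`. -/
noncomputable def Finf (μ₁ μ₂ ξ : ℝ) : ℝ × ℝ × ℝ := (μ₁, μ₂, ξ / (1 - ξ))

/-- The Nigam–Phillips map of the infinite pyramid onto the finite pyramid with apex
`(0,0,1)`, `S_∞(x,y,z) = (x/(1+z), y/(1+z), z/(1+z))`. -/
noncomputable def Sinf (p : ℝ × ℝ × ℝ) : ℝ × ℝ × ℝ :=
  (p.1 / (1 + p.2.2), p.2.1 / (1 + p.2.2), p.2.2 / (1 + p.2.2))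

theorem Sinf_Finf (μ₁ μ₂ : ℝ) {ξ : ℝ} (hξ : ξ ≠ 1) :
    Sinf (Finf μ₁ μ₂ ξ) = ((1 - ξ) * μ₁, (1 - ξ) * μ₂, ξ) := by
  have h1 : (1 : ℝ) - ξ ≠ 0 := sub_ne_zero.mpr hξ.symm
  have hden : 1 + ξ / (1 - ξ) = (1 - ξ)⁻¹ := by field_simp; ring
  simp only [Sinf, Finf, hden, div_inv_eq_mul]
  refine Prod.ext (mul_comm _ _) (Prod.ext (mul_comm _ _) ?_)
  field_simp

theorem smul_sub_apex_add_apex (t a b : ℝ) :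
    t • (((a, b, 0) : ℝ × ℝ × ℝ) - (0, 0, 1)) + (0, 0, 1) = (t * a, t * b, 1 - t) := by
  ext <;> simp only [Prod.fst_add, Prod.snd_add, Prod.smul_fst, Prod.smul_snd, Prod.fst_sub,
    Prod.snd_sub, smul_eq_mul] <;> ring

theorem pyramid_duffy_composition_general
    (μ₁ μ₂ ξ : ℝ) (hξ1 : ξ < 1) :
    Sinf (Finf μ₁ μ₂ ξ) = ((1 - ξ) * μ₁, (1 - ξ) * μ₂, ξ)
    ∧ Sinf (Finf μ₁ μ₂ ξ)
        = (1 - ξ) • (((μ₁, μ₂, 0) : ℝ × ℝ × ℝ) - ((0, 0, 1) : ℝ × ℝ × ℝ))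
            + ((0, 0, 1) : ℝ × ℝ × ℝ) := by
  have key := Sinf_Finf μ₁ μ₂ hξ1.ne
  refine ⟨key, ?_⟩
  rw [key, smul_sub_apex_add_apex, sub_sub_cancel]

/-- For `ξ ∈ [0,1)`, `S_∞(F_∞(μ₁,μ₂,ξ)) = ((1−ξ)μ₁, (1−ξ)μ₂, ξ)`, and with
`ξ' = 1 − ξ` this equals the Duffy transformation `ξ'(F_L(μ₁,μ₂) − a₀) + a₀` with
collapsed vertex `a₀ = (0,0,1)` and base map `F_L(μ₁,μ₂) = (μ₁,μ₂,0)`. -/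
theorem pyramid_duffy_composition
    (μ₁ μ₂ ξ : ℝ) (hξ0 : 0 ≤ ξ) (hξ1 : ξ < 1) :
    Sinf (Finf μ₁ μ₂ ξ) = ((1 - ξ) * μ₁, (1 - ξ) * μ₂, ξ)
    ∧ Sinf (Finf μ₁ μ₂ ξ)
        = (1 - ξ) • (((μ₁, μ₂, 0) : ℝ × ℝ × ℝ) - ((0, 0, 1) : ℝ × ℝ × ℝ))
            + ((0, 0, 1) : ℝ × ℝ × ℝ) :=
  pyramid_duffy_composition_general μ₁ μ₂ ξ hξ1
end

section
/- Let d ≥ 2, a₀ ∈ ℝ^d, let U ⊆ ℝ^{d−1} be open, and let F_L : ℝ^{d−1} → ℝ^d be continuously differentiable on U. Let J_K(ξ,η) be the d×d matrix whose first column is F_L(η) − a₀ and whose remaining columns are ξ times the columns of the Jacobian matrix of F_L at η. Assume the Duffy transformation F_K(ξ,η) = ξ(F_L(η) − a₀) + a₀ is injective on (0,1) × U and det J_K(1,η) ≠ 0 for all η ∈ U. Then for every Lebesgue-integrable function g on K := F_K((0,1) × U), ∫_K g(x) dx = ∫_{(0,1) × U} g(F_K(ξ,η)) · ξ^{d−1}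 · |det J_K(1,η)| d(ξ,η). -/
open Matrix MeasureTheory

/-!
Through `Fin.cons`, which preserves Lebesgue measure, `ℝ × ℝ^{d-1}` is identified with `ℝ^d`, and
the Duffy transformation becomes a map `ℝ^d → ℝ^d` to which the change of variables formula
applies. In these coordinates its derivative at `(ξ, η)` has matrix `J_K(ξ, η)`, and pulling `ξ`
out of the last `d - 1` columns gives `det J_K(ξ, η) = ξ^{d-1} det J_K(1, η)`.
-/

section ChangeOfVariables

variable {E F G : Type*}
  [NormedAddCommGroup E] [NormedSpace ℝ E] [FiniteDimensional ℝ E]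
  [MeasurableSpace E] [BorelSpace E]
  [NormedAddCommGroup F] [NormedSpace ℝ F] [MeasurableSpace F] [BorelSpace F]
  [NormedAddCommGroup G] [NormedSpace ℝ G]

theorem integral_image_eq_integral_abs_det_fderiv_comp_smul (μ : Measure E)
    [μ.IsAddHaarMeasure] (ν : Measure F) (e : E ≃L[ℝ] F) (he : MeasurePreserving e μ ν)
    {s : Set F} (hs : MeasurableSet s) {f : F → E} {f' : F → F →L[ℝ] E}
    (hf' : ∀ p ∈ s, HasFDerivWithinAt f (f' p) s p) (hf : Set.InjOn f s) (g : E → G) :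
    ∫ x in f '' s, g x ∂μ = ∫ p in s, |((f' p).comp (e : E →L[ℝ] F)).det| • g (f p) ∂ν := by
  have hderiv : ∀ x ∈ e ⁻¹' s,
      HasFDerivWithinAt (f ∘ e) ((f' (e x)).comp (e : E →L[ℝ] F)) (e ⁻¹' s) x := fun x hx =>
    (hf' (e x) hx).comp x e.hasFDerivAt.hasFDerivWithinAt (Set.mapsTo_preimage e s)
  have himage : (f ∘ e) '' (e ⁻¹' s) = f '' s := by
    rw [Set.image_comp, Set.image_preimage_eq s e.surjective]
  rw [← himage, integral_image_eq_integral_abs_det_fderiv_smul μ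
    (hs.preimage e.continuous.measurable) hderiv
    (hf.comp e.injective.injOn (Set.mapsTo_preimage e s)) g]
  exact he.setIntegral_preimage_emb e.toHomeomorph.measurableEmbedding
    (fun p => |((f' p).comp (e : E →L[ℝ] F)).det| • g (f p)) s

end ChangeOfVariables

theorem volume_preserving_consEquivL_symm (n : ℕ) :
    MeasurePreserving (Fin.consEquivL ℝ fun _ : Fin (n + 1) => ℝ).symm := by
  have hcoe : ⇑(Fin.consEquivL ℝ fun _ : Fin (n + 1) => ℝ).symm
      = MeasurableEquiv.piFinSuccAbove (fun _ : Fin (n + 1) => ℝ) 0 := by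
    ext x <;> simp [MeasurableEquiv.piFinSuccAbove]
  rw [hcoe]
  exact volume_preserving_piFinSuccAbove _ 0

section DuffyMap

variable {E F : Type*} [NormedAddCommGroup E] [NormedSpace ℝ E]
  [NormedAddCommGroup F] [NormedSpace ℝ F]

def duffyMap (a₀ : F) (FL : E → F) (p : ℝ × E) : F := p.1 • (FL p.2 - a₀) + a₀

theorem hasFDerivAt_duffyMap {a₀ : F} {FL : E → F} {L : E →L[ℝ] F} {p : ℝ × E}
    (h : HasFDerivAt FL L p.2) :
    HasFDerivAt (duffyMap a₀ FL)
      (p.1 • L.comp (ContinuousLinearMap.snd ℝ ℝ E)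
        + (ContinuousLinearMap.fst ℝ ℝ E).smulRight (FL p.2 - a₀)) p :=
  ((hasFDerivAt_fst.smul ((h.comp p hasFDerivAt_snd).sub_const a₀)).add_const a₀)

end DuffyMap

theorem toMatrix'_smul_comp_snd_add_smulRight_fst_comp_consEquivL_symm {m n : ℕ} (ξ : ℝ)
    (L : (Fin n → ℝ) →L[ℝ] (Fin m → ℝ)) (v : Fin m → ℝ) :
    LinearMap.toMatrix' ((ξ • L.comp (ContinuousLinearMap.snd ℝ ℝ _)
        + (ContinuousLinearMap.fst ℝ ℝ _).smulRight v).comp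
          ((Fin.consEquivL ℝ fun _ : Fin (n + 1) => ℝ).symm : _ →L[ℝ] ℝ × (Fin n → ℝ))
        : (Fin (n + 1) → ℝ) →L[ℝ] (Fin m → ℝ)).toLinearMap
      = of fun i j => Fin.cases (v i) (fun j' => ξ * L (Pi.single j' 1) i) j := by
  ext i j
  induction j using Fin.cases with
  | zero =>
    have htail : Fin.tail (Pi.single 0 1 : Fin (n + 1) → ℝ) = 0 := by
      ext k; simp [Fin.tail]
    simp [LinearMap.toMatrix'_apply, htail]
  | succ j' =>
    have htail : Fin.tail (Pi.single j'.succ 1 : Fin (n + 1) → ℝ) = Pi.single j' 1 := by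
      ext k; simp [Fin.tail, Pi.single_apply]
    simp [LinearMap.toMatrix'_apply, htail]

theorem det_of_cases_const_mul {R : Type*} [CommRing R] {n : ℕ} (c : R) (v : Fin (n + 1) → R)
    (A : Matrix (Fin (n + 1)) (Fin n) R) :
    det (of fun i (j : Fin (n + 1)) => Fin.cases (v i) (fun j' => c * A i j') j)
      = c ^ n * det (of fun i (j : Fin (n + 1)) => Fin.cases (v i) (A i) j) := by
  let B : Matrix (Fin (n + 1)) (Fin (n + 1)) R := of fun i j => Fin.cases (v i) (A i) j
  have hscale : (of fun i (j : Fin (n + 1)) => Fin.cases (v i) (fun j' => c * A i j') j)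
      = of fun i j => (Fin.cons 1 fun _ => c : Fin (n + 1) → R) j * B i j := by
    ext i j
    induction j using Fin.cases <;> simp [B]
  rw [hscale, det_mul_row, Fin.prod_cons, Finset.prod_const, Finset.card_univ, Fintype.card_fin,
    one_mul]

theorem duffy_change_of_variables_general
    (n : ℕ)
    (a₀ : Fin (n + 1) → ℝ)
    (FL : (Fin n → ℝ) → (Fin (n + 1) → ℝ))
    (U : Set (Fin n → ℝ)) (hU : IsOpen U)
    (hFL : ContDiffOn ℝ 1 FL U)
    (JK : ℝ → (Fin n → ℝ) → Matrix (Fin (n + 1)) (Fin (n + 1)) ℝ)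
    (hJK : ∀ (ξ : ℝ) (η : Fin n → ℝ) (i : Fin (n + 1)) (j : Fin (n + 1)),
      JK ξ η i j =
        Fin.cases ((FL η - a₀) i) (fun j' => ξ * fderiv ℝ FL η (Pi.single j' 1) i) j)
    (hinj : Set.InjOn (fun p : ℝ × (Fin n → ℝ) => p.1 • (FL p.2 - a₀) + a₀)
      (Set.Ioo 0 1 ×ˢ U))
    (g : (Fin (n + 1) → ℝ) → ℝ) :
    ∫ x in (fun p : ℝ × (Fin n → ℝ) => p.1 • (FL p.2 - a₀) + a₀) '' (Set.Ioo 0 1 ×ˢ U),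
        g x
      = ∫ p in Set.Ioo (0:ℝ) 1 ×ˢ U,
          g (p.1 • (FL p.2 - a₀) + a₀) * p.1 ^ n * |(JK 1 p.2).det| := by
  have hT : MeasurableSet (Set.Ioo (0:ℝ) 1 ×ˢ U) := measurableSet_Ioo.prod hU.measurableSet
  have hderiv : ∀ p ∈ Set.Ioo (0:ℝ) 1 ×ˢ U, HasFDerivAt (duffyMap a₀ FL)
      (p.1 • (fderiv ℝ FL p.2).comp (ContinuousLinearMap.snd ℝ ℝ _)
        + (ContinuousLinearMap.fst ℝ ℝ _).smulRight (FL p.2 - a₀)) p := fun p hp =>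
    hasFDerivAt_duffyMap
      ((hFL.differentiableOn one_ne_zero).differentiableAt (hU.mem_nhds hp.2)).hasFDerivAt
  have hJK_of : ∀ ξ η, JK ξ η = of fun i j =>
      Fin.cases ((FL η - a₀) i) (fun j' => ξ * fderiv ℝ FL η (Pi.single j' 1) i) j :=
    fun ξ η => Matrix.ext (hJK ξ η)
  rw [show (fun p : ℝ × (Fin n → ℝ) => p.1 • (FL p.2 - a₀) + a₀) = duffyMap a₀ FL from rfl,
    integral_image_eq_integral_abs_det_fderiv_comp_smul volume volume _
      (volume_preserving_consEquivL_symm n) hT (fun p hp => (hderiv p hp).hasFDerivWithinAt) hinj]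
  refine setIntegral_congr_fun hT fun p hp => ?_
  rw [ContinuousLinearMap.det, ← LinearMap.det_toMatrix',
    toMatrix'_smul_comp_snd_add_smulRight_fst_comp_consEquivL_symm,
    det_of_cases_const_mul p.1 (FL p.2 - a₀) fun i j' => fderiv ℝ FL p.2 (Pi.single j' 1) i,
    hJK_of]
  simp only [one_mul, abs_mul, abs_pow, abs_of_pos hp.1.1, smul_eq_mul, duffyMap]
  ring

/-- Writing `d = n + 1` with `n ≥ 1` (so `d ≥ 2`), let `F_L` be `C¹` on an
open set `U ⊆ ℝ^{d−1}`, let `J_K(ξ,η)` be the matrix with first column `F_L η − a₀` and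
remaining columns `ξ` times the columns of the Jacobian of `F_L` at `η`, suppose the
Duffy transformation `F_K(ξ,η) = ξ • (F_L η − a₀) + a₀` is injective on `(0,1) × U` and
`det J_K(1,η) ≠ 0` on `U`.  Then for every Lebesgue-integrable `g` on
`K = F_K((0,1) × U)`,
`∫_K g = ∫_{(0,1)×U} g(F_K(ξ,η)) ξ^{d−1} |det J_K(1,η)|`. -/
theorem duffy_change_of_variables
    (n : ℕ) (hn : 1 ≤ n)
    (a₀ : Fin (n + 1) → ℝ)
    (FL : (Fin n → ℝ) → (Fin (n + 1) → ℝ))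
    (U : Set (Fin n → ℝ)) (hU : IsOpen U)
    (hFL : ContDiffOn ℝ 1 FL U)
    (JK : ℝ → (Fin n → ℝ) → Matrix (Fin (n + 1)) (Fin (n + 1)) ℝ)
    (hJK : ∀ (ξ : ℝ) (η : Fin n → ℝ) (i : Fin (n + 1)) (j : Fin (n + 1)),
      JK ξ η i j =
        Fin.cases ((FL η - a₀) i) (fun j' => ξ * fderiv ℝ FL η (Pi.single j' 1) i) j)
    (hinj : Set.InjOn (fun p : ℝ × (Fin n → ℝ) => p.1 • (FL p.2 - a₀) + a₀)
      (Set.Ioo 0 1 ×ˢ U))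
    (hdet : ∀ η ∈ U, (JK 1 η).det ≠ 0)
    (g : (Fin (n + 1) → ℝ) → ℝ)
    (hg : IntegrableOn g
      ((fun p : ℝ × (Fin n → ℝ) => p.1 • (FL p.2 - a₀) + a₀) '' (Set.Ioo 0 1 ×ˢ U))) :
    ∫ x in (fun p : ℝ × (Fin n → ℝ) => p.1 • (FL p.2 - a₀) + a₀) '' (Set.Ioo 0 1 ×ˢ U),
        g x
      = ∫ p in Set.Ioo (0:ℝ) 1 ×ˢ U,
          g (p.1 • (FL p.2 - a₀) + a₀) * p.1 ^ n * |(JK 1 p.2).det| :=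
  duffy_change_of_variables_general n a₀ FL U hU hFL JK hJK hinj g
end
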